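/- Let Φ: ℝ^p ⇉ ℝ^q be a polyhedral sublinear set-valued mapping and let ū ∈ dom(Φ). Then the following minimax identity holds: min_{v ∈ Φ(ū)} ‖v‖ = max { ⟨z, ū⟩ : w ∈ ℝ^q, ‖w‖* ≤ 1, z ∈ Φ*(w) }. -/

import Mathlib

open Matrix Set

noncomputable section

/-- A norm on `Fin n → ℝ`, given as a function with the norm axioms. -/
structure IsNorm {n : ℕ} (ν : (Fin n → ℝ) → ℝ) : Prop where
  nonneg : ∀ x, 0 ≤ ν x
  eq_zero_iff : ∀ x, ν x = 0 ↔ x = 0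
  smul : ∀ (a : ℝ) (x : Fin n → ℝ), ν (a • x) = |a| * ν x
  triangle : ∀ x y, ν (x + y) ≤ ν x + ν y

/-- The dual norm of `ν`, with respect to the standard dot-product pairing. -/
def dualNorm {n : ℕ} (ν : (Fin n → ℝ) → ℝ) (z : Fin n → ℝ) : ℝ :=
  sSup {r | ∃ x, ν x ≤ 1 ∧ r = z ⬝ᵥ x}

/-- Point-to-set distance induced by the norm `ν`. -/
def distWith {n : ℕ} (ν : (Fin n → ℝ) → ℝ) (x : Fin n → ℝ) (S : Set (Fin n → ℝ)) : ℝ :=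
  sInf ((fun s => ν (x - s)) '' S)

/-- The graph of a set-valued mapping. -/
def graphOf {p q : ℕ} (Φ : (Fin p → ℝ) → Set (Fin q → ℝ)) :
    Set ((Fin p → ℝ) × (Fin q → ℝ)) := {z | z.2 ∈ Φ z.1}

/-- The domain of a set-valued mapping. -/
def domOf {p q : ℕ} (Φ : (Fin p → ℝ) → Set (Fin q → ℝ)) : Set (Fin p → ℝ) :=
  {u | (Φ u).Nonempty}

/-- The image of a set-valued mapping. -/
def imOf {p q : ℕ} (Φ : (Fin p → ℝ) → Set (Fin q → ℝ)) : Set (Fin q → ℝ) :=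
  ⋃ u, Φ u

/-- The inverse of a set-valued mapping. -/
def invOf {p q : ℕ} (Φ : (Fin p → ℝ) → Set (Fin q → ℝ)) : (Fin q → ℝ) → Set (Fin p → ℝ) :=
  fun v => {u | v ∈ Φ u}

/-- A polyhedron: an intersection of finitely many closed half-spaces. -/
def IsPolyhedron {E : Type*} [AddCommGroup E] [Module ℝ E] (S : Set E) : Prop :=
  ∃ (k : ℕ) (f : Fin k → E →ₗ[ℝ] ℝ) (c : Fin k → ℝ), S = {x | ∀ i, f i x ≤ c i}

/-- A set-valued mapping is polyhedral if its graph is a polyhedron. -/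
def IsPolyhedralMapping {p q : ℕ} (Φ : (Fin p → ℝ) → Set (Fin q → ℝ)) : Prop :=
  IsPolyhedron (graphOf Φ)

/-- A set-valued mapping is sublinear if its graph is a convex cone containing the origin. -/
def IsSublinearMapping {p q : ℕ} (Φ : (Fin p → ℝ) → Set (Fin q → ℝ)) : Prop :=
  (0 : Fin q → ℝ) ∈ Φ 0 ∧ Convex ℝ (graphOf Φ) ∧
    ∀ (t : ℝ), 0 ≤ t → ∀ z ∈ graphOf Φ, t • z ∈ graphOf Φ

/-- The Hoffman constant of a set-valued mapping, with respect to the norms `νp, νq`. -/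
def hoffmanConst {p q : ℕ} (νp : (Fin p → ℝ) → ℝ) (νq : (Fin q → ℝ) → ℝ)
    (Φ : (Fin p → ℝ) → Set (Fin q → ℝ)) : ℝ :=
  sSup {r | ∃ u v, u ∈ domOf Φ ∧ v ∈ imOf Φ ∧ v ∉ Φ u ∧
    r = distWith νq v (Φ u) / distWith νp u (invOf Φ v)}

/-- The norm of a sublinear set-valued mapping, with respect to the norms `νp, νq`. -/
def svmNorm {p q : ℕ} (νp : (Fin p → ℝ) → ℝ) (νq : (Fin q → ℝ) → ℝ)
    (Φ : (Fin p → ℝ) → Set (Fin q → ℝ)) : ℝ :=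
  sSup {r | ∃ u, u ∈ domOf Φ ∧ νp u ≤ 1 ∧ r = sInf (νq '' Φ u)}

/-- The tangent cone to a set `G` at a point `g ∈ G`. -/
def polyTangentCone {E : Type*} [AddCommGroup E] [Module ℝ E] (G : Set E) (g : E) : Set E :=
  {d | ∃ t : ℝ, 0 < t ∧ g + t • d ∈ G}

/-- The collection of tangent cones to the graph of `Φ`. -/
def tangentCones {p q : ℕ} (Φ : (Fin p → ℝ) → Set (Fin q → ℝ)) :
    Set (Set ((Fin p → ℝ) × (Fin q → ℝ))) :=
  {T | ∃ u v, v ∈ Φ u ∧ T = polyTangentCone (graphOf Φ) (u, v)}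

/-- The set-valued mapping whose graph is `T`. -/
def mapOfGraph {p q : ℕ} (T : Set ((Fin p → ℝ) × (Fin q → ℝ))) :
    (Fin p → ℝ) → Set (Fin q → ℝ) := fun w => {z | (w, z) ∈ T}

/-- A subset is a linear subspace if it is the underlying set of a submodule. -/
def IsLinearSubspace {E : Type*} [AddCommGroup E] [Module ℝ E] (S : Set E) : Prop :=
  ∃ W : Submodule ℝ E, S = ↑W

/-- The upper adjoint of a sublinear mapping. -/
def upperAdjoint {p q : ℕ} (Φ : (Fin p → ℝ) → Set (Fin q → ℝ)) :
    (Fin q → ℝ) → Set (Fin p → ℝ) :=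
  fun w => {z | ∀ u v, v ∈ Φ u → z ⬝ᵥ u ≤ w ⬝ᵥ v}

/-- The solution mapping `b ↦ {x ∈ R : Ax - b ∈ S}`. -/
def solMap {m n : ℕ} (A : Matrix (Fin m) (Fin n) ℝ) (R : Set (Fin n → ℝ))
    (S : Set (Fin m → ℝ)) : (Fin m → ℝ) → Set (Fin n → ℝ) :=
  fun b => {x | x ∈ R ∧ A *ᵥ x - b ∈ S}

/-- The dual cone `{z : ⟨z,x⟩ ≥ 0 for all x ∈ C}`. -/
def dualConeOf {n : ℕ} (C : Set (Fin n → ℝ)) : Set (Fin n → ℝ) :=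
  {z | ∀ x ∈ C, 0 ≤ z ⬝ᵥ x}

/-- A polyhedral cone. -/
def IsPolyhedralCone {n : ℕ} (C : Set (Fin n → ℝ)) : Prop :=
  IsPolyhedron C ∧ (0 : Fin n → ℝ) ∈ C ∧ ∀ (t : ℝ), 0 ≤ t → ∀ x ∈ C, t • x ∈ C

/-- The dual solution mapping `c ↦ {y ∈ S* : c - Aᵀy ∈ R*}`. -/
def dualSolMap {m n : ℕ} (A : Matrix (Fin m) (Fin n) ℝ) (R : Set (Fin n → ℝ))
    (S : Set (Fin m → ℝ)) : (Fin n → ℝ) → Set (Fin m → ℝ) :=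
  fun c => {y | y ∈ dualConeOf S ∧ c - Aᵀ *ᵥ y ∈ dualConeOf R}

/-- The box `{x : ℓ ≤ x ≤ u}`. -/
def boxSet {n : ℕ} (ℓ u : Fin n → ℝ) : Set (Fin n → ℝ) :=
  {x | ∀ i, ℓ i ≤ x i ∧ x i ≤ u i}

/-- The nonnegative orthant of `ℝ^n`. -/
def nonnegOrthant (n : ℕ) : Set (Fin n → ℝ) := {x | ∀ i, 0 ≤ x i}

/-- The Euclidean norm on `Fin n → ℝ`. -/
def euclNorm {n : ℕ} (x : Fin n → ℝ) : ℝ := Real.sqrt (∑ i, x i ^ 2)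

/-- The operator norm induced by the Euclidean norms. -/
def opNorm2 {m n : ℕ} (M : Matrix (Fin m) (Fin n) ℝ) : ℝ :=
  sSup {r | ∃ x, euclNorm x ≤ 1 ∧ r = euclNorm (M *ᵥ x)}

/-- The chi condition measure `χ(A) = sup_{D} ‖(ADAᵀ)⁻¹AD‖₂`. -/
def chiMeasure {m n : ℕ} (A : Matrix (Fin m) (Fin n) ℝ) : ℝ :=
  sSup {r | ∃ d : Fin n → ℝ, (∀ i, 0 < d i) ∧
    r = opNorm2 ((A * Matrix.diagonal d * Aᵀ)⁻¹ * (A * Matrix.diagonal d))}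

/-- The chi-bar condition measure `χ̄(A) = sup_{D} ‖Aᵀ(ADAᵀ)⁻¹AD‖₂`. -/
def chiBarMeasure {m n : ℕ} (A : Matrix (Fin m) (Fin n) ℝ) : ℝ :=
  sSup {r | ∃ d : Fin n → ℝ, (∀ i, 0 < d i) ∧
    r = opNorm2 (Aᵀ * (A * Matrix.diagonal d * Aᵀ)⁻¹ * (A * Matrix.diagonal d))}

/-- The orthogonal complement (w.r.t. the dot product) of a set. -/
def perpOf {m : ℕ} (L : Set (Fin m → ℝ)) : Set (Fin m → ℝ) :=
  {y | ∀ s ∈ L, y ⬝ᵥ s = 0}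

/-- The mapping `P_A : b ↦ {x ≥ 0 : Ax = b}`. -/
def PA {m n : ℕ} (A : Matrix (Fin m) (Fin n) ℝ) : (Fin m → ℝ) → Set (Fin n → ℝ) :=
  fun b => {x | (∀ i, 0 ≤ x i) ∧ A *ᵥ x = b}

/-- The mapping `P_A* : c ↦ {y : Aᵀy ≤ c}`. -/
def PAstar {m n : ℕ} (A : Matrix (Fin m) (Fin n) ℝ) : (Fin n → ℝ) → Set (Fin m → ℝ) :=
  fun c => {y | ∀ i, (Aᵀ *ᵥ y) i ≤ c i}

/-- Signature vectors: entries equal to `1` or `-1`. -/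
def IsSignVector {n : ℕ} (d : Fin n → ℝ) : Prop := ∀ i, d i = 1 ∨ d i = -1

end

/-!
Weak duality is immediate: `z ∈ Φ*(w)` and `v ∈ Φ(ū)` give `⟨z, ū⟩ ≤ ⟨w, v⟩ ≤ ‖w‖* ‖v‖`.
For the converse, let `μ` be the minimal norm on `Φ(ū)`. Separating the open ball of radius `μ`
from the convex set `Φ(ū)` gives `w` with `‖w‖* ≤ 1` and `⟨w, v⟩ ≥ μ` on `Φ(ū)`. Since the graph
of `Φ` is a polyhedral cone, it is `{(u, v) | A u + B v ≤ 0}`, so `Φ(ū) = {v | B v ≤ -A ū}` and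
LP duality (the inhomogeneous Farkas lemma) yields `y ≥ 0` with `yᵀB = -w` and `⟨y, A ū⟩ ≥ μ`;
then `z = yᵀA ∈ Φ*(w)` and `⟨z, ū⟩ ≥ μ`. Farkas' lemma rests on the closedness of finitely
generated cones, which follows from the conic Carathéodory theorem.
-/

section ConicCaratheodory

variable {ι E : Type*} [AddCommGroup E] [Module ℝ E] (v : ι → E)

lemma exists_nonneg_sum_erase_eq_of_not_linearIndepOn [DecidableEq ι] {s : Finset ι}
    (hs : ¬LinearIndepOn ℝ v s) {c : ι → ℝ} (hc : ∀ i ∈ s, 0 ≤ c i) :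
    ∃ j ∈ s, ∃ c' : ι → ℝ, (∀ i ∈ s.erase j, 0 ≤ c' i) ∧
      ∑ i ∈ s.erase j, c' i • v i = ∑ i ∈ s, c i • v i := by
  obtain ⟨g, hg, i₀, hi₀, hgi₀⟩ := not_linearIndepOn_finset_iff.1 hs
  wlog hpos : 0 < g i₀ generalizing g
  · refine this (-g) (by simp [neg_smul, hg]) (neg_ne_zero.2 hgi₀) ?_
    exact neg_pos.2 (lt_of_le_of_ne (not_lt.1 hpos) hgi₀)
  -- Move `c` along the relation `g` until the first coefficient reaches zero.
  obtain ⟨j, hj, hmin⟩ := Finset.exists_min_image (s.filter (0 < g ·)) (fun i => c i / g i)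
    ⟨i₀, Finset.mem_filter.2 ⟨hi₀, hpos⟩⟩
  obtain ⟨hjs, hgj⟩ := Finset.mem_filter.1 hj
  set t := c j / g j
  have ht : 0 ≤ t := div_nonneg (hc j hjs) hgj.le
  refine ⟨j, hjs, fun i => c i - t * g i, fun i hi => ?_, ?_⟩
  · have his := Finset.mem_of_mem_erase hi
    rcases lt_or_ge 0 (g i) with hgi | hgi
    · linarith [(le_div_iff₀ hgi).1 (hmin i (Finset.mem_filter.2 ⟨his, hgi⟩))]
    · nlinarith [hc i his]
  · rw [Finset.sum_erase _ (by simp [t, div_mul_cancel₀ _ hgj.ne'])]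
    simp only [sub_smul, Finset.sum_sub_distrib, mul_smul, ← Finset.smul_sum, hg, smul_zero,
      sub_zero]

theorem exists_linearIndepOn_nonneg_sum_eq (s : Finset ι) {c : ι → ℝ}
    (hc : ∀ i ∈ s, 0 ≤ c i) :
    ∃ t ⊆ s, LinearIndepOn ℝ v t ∧
      ∃ c' : ι → ℝ, (∀ i ∈ t, 0 ≤ c' i) ∧ ∑ i ∈ t, c' i • v i = ∑ i ∈ s, c i • v i := by
  classical
  induction s using Finset.strongInduction generalizing c with
  | H s ih =>
    by_cases hs : LinearIndepOn ℝ v s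
    · exact ⟨s, subset_rfl, hs, c, hc, rfl⟩
    · obtain ⟨j, hj, c', hc', hsum⟩ := exists_nonneg_sum_erase_eq_of_not_linearIndepOn v hs hc
      obtain ⟨t, hts, ht, c'', hc'', hsum'⟩ := ih _ (Finset.erase_ssubset hj) hc'
      exact ⟨t, hts.trans (Finset.erase_subset _ _), ht, c'', hc'', hsum'.trans hsum⟩

end ConicCaratheodory

namespace PointedCone

variable {ι E : Type*} [Fintype ι]

lemma mem_hull_range_iff [AddCommGroup E] [Module ℝ E] {v : ι → E} {x : E} :
    x ∈ hull ℝ (range v) ↔ ∃ c : ι → ℝ, 0 ≤ c ∧ ∑ i, c i • v i = x := by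
  rw [Submodule.mem_span_range_iff_exists_fun]
  constructor
  · rintro ⟨c, rfl⟩
    exact ⟨fun i => c i, fun i => (c i).2, by simp [Nonneg.coe_smul]⟩
  · rintro ⟨c, hc, rfl⟩
    exact ⟨fun i => ⟨c i, hc i⟩, by simp [Nonneg.mk_smul]⟩

theorem isClosed_hull_range [NormedAddCommGroup E] [NormedSpace ℝ E] (v : ι → E) :
    IsClosed (hull ℝ (range v) : Set E) := by
  classical
  let L (t : Finset ι) : (t → ℝ) →ₗ[ℝ] E := Fintype.linearCombination ℝ fun i : t => v i
  have hcone : (hull ℝ (range v) : Set E) =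
      ⋃ t : {t : Finset ι // LinearIndepOn ℝ v t}, L t '' Ici 0 := by
    ext x
    simp only [SetLike.mem_coe, mem_iUnion, mem_image]
    constructor
    · rw [mem_hull_range_iff]
      rintro ⟨c, hc, rfl⟩
      obtain ⟨t, -, ht, c', hc', hsum⟩ :=
        exists_linearIndepOn_nonneg_sum_eq v Finset.univ fun i _ => hc i
      refine ⟨⟨t, ht⟩, fun i => c' i, fun i => hc' i i.2, ?_⟩
      simpa [L, Fintype.linearCombination_apply, Finset.sum_attach t (fun i => c' i • v i)]
        using hsum
    · rintro ⟨t, c, hc, rfl⟩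
      exact Submodule.sum_mem _ fun i _ =>
        PointedCone.smul_mem _ (hc i) (subset_hull (mem_range_self _))
  rw [hcone]
  refine isClosed_iUnion_of_finite fun t => ?_
  have hinj : LinearMap.ker (L t) = ⊥ :=
    LinearMap.ker_eq_bot.2 (linearIndependent_iff_injective_fintypeLinearCombination.1 t.2)
  exact (LinearMap.isClosedEmbedding_of_injective hinj).isClosedMap _ isClosed_Ici

end PointedCone

section Farkas

variable {ι κ : Type*} [Fintype κ]

lemma exists_eq_dotProduct (f : (κ → ℝ) →ₗ[ℝ] ℝ) : ∃ y : κ → ℝ, ∀ x, f x = y ⬝ᵥ x := by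
  classical
  exact ⟨(dotProductEquiv ℝ κ).symm f, fun x => by
    rw [← dotProductEquiv_apply_apply, LinearEquiv.apply_symm_apply]⟩

theorem exists_nonneg_vecMul_eq_of_forall_mulVec_nonneg [Fintype ι] {A : Matrix ι κ ℝ}
    {c : κ → ℝ} (h : ∀ x, 0 ≤ A *ᵥ x → 0 ≤ c ⬝ᵥ x) : ∃ y, 0 ≤ y ∧ y ᵥ* A = c := by
  by_contra hc
  let C : ProperCone ℝ (κ → ℝ) :=
    ⟨PointedCone.hull ℝ (range A), PointedCone.isClosed_hull_range A⟩
  have hcC : c ∉ C := fun hmem => by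
    obtain ⟨y, hy, hyA⟩ := PointedCone.mem_hull_range_iff.1 hmem
    exact hc ⟨y, hy, by rwa [vecMul_eq_sum]⟩
  obtain ⟨f, hfC, hfc⟩ := C.hyperplane_separation_point hcC
  obtain ⟨x, hx⟩ := exists_eq_dotProduct f.toLinearMap
  simp only [ContinuousLinearMap.coe_coe] at hx
  have hAx : 0 ≤ A *ᵥ x := fun i => by
    change 0 ≤ A i ⬝ᵥ x
    rw [dotProduct_comm, ← hx]
    exact hfC (A i) (PointedCone.subset_hull (mem_range_self i))
  have := h x hAx
  rw [hx, dotProduct_comm] at hfc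
  linarith

lemma dotProduct_nonpos_of_mulVec_nonpos {A : Matrix ι κ ℝ} {d : ι → ℝ} {c : κ → ℝ} {b : ℝ}
    {v₀ : κ → ℝ} (hv₀ : A *ᵥ v₀ ≤ d) (hbound : ∀ v, A *ᵥ v ≤ d → c ⬝ᵥ v ≤ b)
    {w : κ → ℝ} (hw : A *ᵥ w ≤ 0) : c ⬝ᵥ w ≤ 0 := by
  by_contra! hcw
  set s := (b - c ⬝ᵥ v₀ + 1) / (c ⬝ᵥ w)
  have hs : 0 ≤ s := div_nonneg (by linarith [hbound v₀ hv₀]) hcw.le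
  have hfeas : A *ᵥ (v₀ + s • w) ≤ d := by
    rw [mulVec_add, mulVec_smul]
    calc A *ᵥ v₀ + s • A *ᵥ w ≤ d + s • (0 : ι → ℝ) :=
          add_le_add hv₀ (smul_le_smul_of_nonneg_left hw hs)
      _ = d := by simp
  have := hbound _ hfeas
  rw [dotProduct_add, dotProduct_smul, smul_eq_mul, div_mul_cancel₀ _ hcw.ne'] at this
  linarith

theorem exists_nonneg_vecMul_eq_dotProduct_le [Fintype ι] {A : Matrix ι κ ℝ} {d : ι → ℝ}
    {c : κ → ℝ} {b : ℝ} (hfeas : ∃ v, A *ᵥ v ≤ d) (hbound : ∀ v, A *ᵥ v ≤ d → c ⬝ᵥ v ≤ b) :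
    ∃ y, 0 ≤ y ∧ y ᵥ* A = c ∧ y ⬝ᵥ d ≤ b := by
  obtain ⟨v₀, hv₀⟩ := hfeas
  -- Homogenization: `x = (t, v)` has `A' x ≥ 0` iff `t ≥ 0 ∧ A v ≤ t d`,
  -- and `c' ⬝ x = b t - c ⬝ v`.
  let A' : Matrix (Option ι) (Option κ) ℝ :=
    Matrix.of fun r s => r.elim (s.elim 1 0) fun i => s.elim (d i) fun j => -A i j
  let c' : Option κ → ℝ := fun s => s.elim b fun j => -c j
  have hA' : ∀ x, A' *ᵥ x =
      fun r => r.elim (x none) fun i => d i * x none - (A *ᵥ (x ∘ some)) i := by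
    intro x; ext (_ | i) <;> simp [A', mulVec, dotProduct, Fintype.sum_option, sub_eq_add_neg]
  have hc' : ∀ x, c' ⬝ᵥ x = b * x none - c ⬝ᵥ (x ∘ some) := by
    intro x; simp [c', dotProduct, Fintype.sum_option, sub_eq_add_neg]
  have hhom : ∀ x, 0 ≤ A' *ᵥ x → 0 ≤ c' ⬝ᵥ x := by
    intro x hx
    have ht : 0 ≤ x none := by simpa [hA'] using hx none
    have hAw : A *ᵥ (x ∘ some) ≤ x none • d := fun i => by
      have := hx (some i)
      simp only [hA', Option.elim_some, Pi.zero_apply, Pi.smul_apply, smul_eq_mul] at this ⊢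
      linarith
    rw [hc']
    rcases ht.eq_or_lt with ht0 | htpos
    · rw [← ht0, zero_smul] at hAw
      rw [← ht0, mul_zero, zero_sub, neg_nonneg]
      exact dotProduct_nonpos_of_mulVec_nonpos hv₀ hbound hAw
    · have hfeas : A *ᵥ ((x none)⁻¹ • (x ∘ some)) ≤ d := by
        rw [mulVec_smul]
        calc (x none)⁻¹ • A *ᵥ (x ∘ some) ≤ (x none)⁻¹ • x none • d :=
              smul_le_smul_of_nonneg_left hAw (inv_nonneg.2 ht)
          _ = d := by rw [smul_smul, inv_mul_cancel₀ htpos.ne', one_smul]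
      have := hbound _ hfeas
      rw [dotProduct_smul, smul_eq_mul, inv_mul_le_iff₀ htpos] at this
      linarith
  obtain ⟨y', hy', hy'A'⟩ := exists_nonneg_vecMul_eq_of_forall_mulVec_nonneg hhom
  refine ⟨y' ∘ some, fun i => hy' (some i), ?_, ?_⟩
  · ext j
    simpa [A', c', vecMul, dotProduct, Fintype.sum_option] using congrFun hy'A' (some j)
  · have hnone := congrFun hy'A' none
    simp only [A', c', vecMul, dotProduct, of_apply, Option.elim_none, Option.elim_some,
      Fintype.sum_option, mul_one] at hnone
    simp only [dotProduct, Function.comp_apply]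
    linarith [show 0 ≤ y' none from hy' none]

end Farkas

lemma dualNorm_le_of_forall {n : ℕ} {ν : (Fin n → ℝ) → ℝ} {w : Fin n → ℝ} {C : ℝ} (hC : 0 ≤ C)
    (h : ∀ x, ν x ≤ 1 → w ⬝ᵥ x ≤ C) : dualNorm ν w ≤ C :=
  Real.sSup_le (by rintro _ ⟨x, hx, rfl⟩; exact h x hx) hC

namespace IsNorm

variable {n : ℕ} {ν : (Fin n → ℝ) → ℝ}

lemma map_zero (hν : IsNorm ν) : ν 0 = 0 := (hν.eq_zero_iff 0).2 rfl

lemma convexOn (hν : IsNorm ν) : ConvexOn ℝ univ ν := by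
  refine ⟨convex_univ, fun x _ y _ a b ha hb _ => ?_⟩
  calc ν (a • x + b • y) ≤ ν (a • x) + ν (b • y) := hν.triangle _ _
    _ = a • ν x + b • ν y := by
      rw [hν.smul, hν.smul, abs_of_nonneg ha, abs_of_nonneg hb, smul_eq_mul, smul_eq_mul]

lemma continuous (hν : IsNorm ν) : Continuous ν := hν.convexOn.locallyLipschitz.continuous

lemma exists_pos_mul_norm_le (hν : IsNorm ν) : ∃ c > 0, ∀ x, c * ‖x‖ ≤ ν x := by
  have hpos : ∀ x ∈ Metric.sphere (0 : Fin n → ℝ) 1, 0 < ν x := fun x hx =>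
    (hν.nonneg x).lt_of_ne' fun h => by simp [(hν.eq_zero_iff x).1 h] at hx
  obtain ⟨C, hC⟩ := (isCompact_sphere (0 : Fin n → ℝ) 1).exists_bound_of_continuousOn
    (hν.continuous.continuousOn.inv₀ fun x hx => (hpos x hx).ne')
  have hM : 0 < max C 1 := lt_max_of_lt_right one_pos
  refine ⟨(max C 1)⁻¹, inv_pos.2 hM, fun x => ?_⟩
  rcases eq_or_ne x 0 with rfl | hx
  · simp [hν.map_zero]
  have hxn : 0 < ‖x‖ := norm_pos_iff.2 hx
  have hmem : ‖x‖⁻¹ • x ∈ Metric.sphere (0 : Fin n → ℝ) 1 := by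
    simp [norm_smul, hxn.ne']
  have hbound := (hC _ hmem).trans (le_max_left C 1)
  rw [Pi.inv_apply, Real.norm_eq_abs, abs_of_pos (inv_pos.2 (hpos _ hmem)), hν.smul,
    abs_of_pos (inv_pos.2 hxn), mul_inv, inv_inv, ← div_eq_mul_inv,
    div_le_iff₀ ((hν.nonneg x).lt_of_ne' fun h => hx ((hν.eq_zero_iff x).1 h))] at hbound
  rwa [inv_mul_le_iff₀ hM]

lemma isCompact_setOf_le (hν : IsNorm ν) (r : ℝ) : IsCompact {x | ν x ≤ r} := by
  obtain ⟨c, hc, hcν⟩ := hν.exists_pos_mul_norm_le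
  refine Metric.isCompact_of_isClosed_isBounded (isClosed_le hν.continuous continuous_const) ?_
  refine isBounded_iff_forall_norm_le.2 ⟨r / c, fun x hx => ?_⟩
  rw [le_div_iff₀ hc, mul_comm]
  exact (hcν x).trans hx

lemma bddAbove_dotProduct (hν : IsNorm ν) (w : Fin n → ℝ) :
    BddAbove {r | ∃ x, ν x ≤ 1 ∧ r = w ⬝ᵥ x} := by
  obtain ⟨b, hb⟩ := (hν.isCompact_setOf_le 1).bddAbove_image
    (f := fun x => w ⬝ᵥ x) (by fun_prop)
  exact ⟨b, by rintro _ ⟨x, hx, rfl⟩; exact hb ⟨x, hx, rfl⟩⟩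

lemma dotProduct_le_dualNorm_mul (hν : IsNorm ν) (w x : Fin n → ℝ) :
    w ⬝ᵥ x ≤ dualNorm ν w * ν x := by
  rcases (hν.nonneg x).eq_or_lt with h0 | hpos
  · simp [(hν.eq_zero_iff x).1 h0.symm, hν.map_zero]
  have hunit : ν ((ν x)⁻¹ • x) ≤ 1 := by
    rw [hν.smul, abs_of_pos (inv_pos.2 hpos), inv_mul_cancel₀ hpos.ne']
  have := le_csSup (hν.bddAbove_dotProduct w) ⟨_, hunit, rfl⟩
  rw [dotProduct_smul, smul_eq_mul, inv_mul_le_iff₀ hpos, mul_comm] at this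
  exact this

lemma dotProduct_le_of_mem_upperAdjoint {p : ℕ} (hν : IsNorm ν)
    {Φ : (Fin p → ℝ) → Set (Fin n → ℝ)} {w : Fin n → ℝ} {z u : Fin p → ℝ} {v : Fin n → ℝ}
    (hw : dualNorm ν w ≤ 1) (hz : z ∈ upperAdjoint Φ w) (hv : v ∈ Φ u) : z ⬝ᵥ u ≤ ν v :=
  (hz u v hv).trans <| (hν.dotProduct_le_dualNorm_mul w v).trans <|
    mul_le_of_le_one_left (hν.nonneg v) hw

theorem exists_dualNorm_le_one_le_dotProduct (hν : IsNorm ν) {P : Set (Fin n → ℝ)}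
    (hP : Convex ℝ P) {μ : ℝ} (hμ : ∀ v ∈ P, μ ≤ ν v) :
    ∃ w, dualNorm ν w ≤ 1 ∧ ∀ v ∈ P, μ ≤ w ⬝ᵥ v := by
  rcases le_or_gt μ 0 with hμ0 | hμ0
  · exact ⟨0, dualNorm_le_of_forall zero_le_one (by simp), fun _ _ => by simpa using hμ0⟩
  have hball : Convex ℝ {x | ν x < μ} := by simpa using hν.convexOn.convex_lt μ
  obtain ⟨f, u, hfB, hfP⟩ := geometric_hahn_banach_open hball
    (isOpen_lt hν.continuous continuous_const) hP
    (disjoint_left.2 fun v hvB hvP => (hμ v hvP).not_gt hvB)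
  have hu : 0 < u := by simpa using hfB 0 (by simpa [hν.map_zero])
  obtain ⟨w₀, hw₀⟩ := exists_eq_dotProduct f.toLinearMap
  simp only [ContinuousLinearMap.coe_coe] at hw₀
  have hdual : ∀ x, ν x ≤ 1 → μ * (w₀ ⬝ᵥ x) ≤ u := by
    intro x hx
    by_contra! hlt
    have ha : 0 < w₀ ⬝ᵥ x := pos_of_mul_pos_right (hu.trans hlt) hμ0.le
    have ht : 0 < u / (w₀ ⬝ᵥ x) := div_pos hu ha
    have htx : ν ((u / (w₀ ⬝ᵥ x)) • x) < μ := by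
      rw [hν.smul, abs_of_pos ht]
      calc u / (w₀ ⬝ᵥ x) * ν x ≤ u / (w₀ ⬝ᵥ x) := mul_le_of_le_one_right ht.le hx
        _ < μ := (div_lt_iff₀ ha).2 hlt
    have := hfB _ htx
    rw [hw₀, dotProduct_smul, smul_eq_mul, div_mul_cancel₀ _ ha.ne'] at this
    exact lt_irrefl u this
  refine ⟨(μ / u) • w₀, dualNorm_le_of_forall zero_le_one fun x hx => ?_, fun v hv => ?_⟩
  · rw [smul_dotProduct, smul_eq_mul, div_mul_eq_mul_div, div_le_one hu]
    exact hdual x hx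
  · rw [smul_dotProduct, smul_eq_mul, ← hw₀]
    calc μ = μ / u * u := by field_simp
      _ ≤ μ / u * f v := mul_le_mul_of_nonneg_left (hfP v hv) (by positivity)

end IsNorm

theorem IsPolyhedron.exists_eq_setOf_nonpos {E : Type*} [AddCommGroup E] [Module ℝ E]
    {S : Set E} (hS : IsPolyhedron S) (h0 : (0 : E) ∈ S)
    (hcone : ∀ t : ℝ, 0 ≤ t → ∀ x ∈ S, t • x ∈ S) :
    ∃ (k : ℕ) (f : Fin k → E →ₗ[ℝ] ℝ), S = {x | ∀ i, f i x ≤ 0} := by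
  obtain ⟨k, f, c, rfl⟩ := hS
  have hc : ∀ i, 0 ≤ c i := by simpa using h0
  refine ⟨k, f, Set.ext fun x => ⟨fun hx i => ?_, fun hx i => (hx i).trans (hc i)⟩⟩
  by_contra! hpos
  have := hcone ((c i + 1) / f i x) (div_nonneg (by linarith [hc i]) hpos.le) x hx i
  rw [map_smul, smul_eq_mul, div_mul_cancel₀ _ hpos.ne'] at this
  linarith

theorem IsPolyhedralMapping.exists_matrix {p q : ℕ} {Φ : (Fin p → ℝ) → Set (Fin q → ℝ)}
    (hpoly : IsPolyhedralMapping Φ) (hsub : IsSublinearMapping Φ) :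
    ∃ (k : ℕ) (A : Matrix (Fin k) (Fin p) ℝ) (B : Matrix (Fin k) (Fin q) ℝ),
      ∀ u v, v ∈ Φ u ↔ A *ᵥ u + B *ᵥ v ≤ 0 := by
  obtain ⟨k, f, hf⟩ := IsPolyhedron.exists_eq_setOf_nonpos hpoly hsub.1 hsub.2.2
  let F := LinearMap.pi f
  refine ⟨k, LinearMap.toMatrix' (F ∘ₗ .inl ℝ _ _), LinearMap.toMatrix' (F ∘ₗ .inr ℝ _ _),
    fun u v => ?_⟩
  rw [LinearMap.toMatrix'_mulVec, LinearMap.toMatrix'_mulVec, LinearMap.comp_apply,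
    LinearMap.comp_apply, ← map_add, LinearMap.inl_apply, LinearMap.inr_apply, Prod.mk_add_mk,
    add_zero, zero_add]
  exact Set.ext_iff.1 hf (u, v)

lemma convex_apply_of_convex_graphOf {p q : ℕ} {Φ : (Fin p → ℝ) → Set (Fin q → ℝ)}
    (h : Convex ℝ (graphOf Φ)) (u : Fin p → ℝ) : Convex ℝ (Φ u) := by
  intro x hx y hy a b ha hb hab
  simpa [graphOf, ← add_smul, hab] using h (x := (u, x)) hx (y := (u, y)) hy ha hb hab

theorem exists_mem_upperAdjoint_le_dotProduct {p q k : ℕ} {Φ : (Fin p → ℝ) → Set (Fin q → ℝ)}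
    {A : Matrix (Fin k) (Fin p) ℝ} {B : Matrix (Fin k) (Fin q) ℝ}
    (hΦ : ∀ u v, v ∈ Φ u ↔ A *ᵥ u + B *ᵥ v ≤ 0) {u₀ : Fin p → ℝ} (hne : (Φ u₀).Nonempty)
    {w : Fin q → ℝ} {μ : ℝ} (hw : ∀ v ∈ Φ u₀, μ ≤ w ⬝ᵥ v) :
    ∃ z ∈ upperAdjoint Φ w, μ ≤ z ⬝ᵥ u₀ := by
  have hmem : ∀ v, v ∈ Φ u₀ ↔ B *ᵥ v ≤ -(A *ᵥ u₀) := fun v => by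
    rw [hΦ, le_neg_iff_add_nonpos_left]
  obtain ⟨y, hy, hyB, hyd⟩ := exists_nonneg_vecMul_eq_dotProduct_le (c := -w) (b := -μ)
    (hne.imp fun v => (hmem v).1) fun v hv => by
      rw [neg_dotProduct, neg_le_neg_iff]; exact hw v ((hmem v).2 hv)
  refine ⟨y ᵥ* A, fun u v hv => ?_, ?_⟩
  · have := dotProduct_nonneg_of_nonneg hy (neg_nonneg.2 ((hΦ u v).1 hv))
    rw [dotProduct_neg, dotProduct_add, dotProduct_mulVec, dotProduct_mulVec, hyB,
      neg_dotProduct] at this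
    linarith
  · rw [dotProduct_neg, dotProduct_mulVec] at hyd
    linarith

theorem stmt15_general {p q : ℕ} (νq : (Fin q → ℝ) → ℝ)
    (hνq : IsNorm νq)
    (Φ : (Fin p → ℝ) → Set (Fin q → ℝ)) (hpoly : IsPolyhedralMapping Φ)
    (hsub : IsSublinearMapping Φ) (ubar : Fin p → ℝ) (hubar : ubar ∈ domOf Φ) :
    sInf (νq '' Φ ubar) =
      sSup {r | ∃ (w : Fin q → ℝ) (z : Fin p → ℝ),
        dualNorm νq w ≤ 1 ∧ z ∈ upperAdjoint Φ w ∧ r = z ⬝ᵥ ubar} := by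
  obtain ⟨k, A, B, hΦ⟩ := hpoly.exists_matrix hsub
  set μ := sInf (νq '' Φ ubar)
  have hμ : ∀ v ∈ Φ ubar, μ ≤ νq v := fun v hv =>
    csInf_le ⟨0, by rintro _ ⟨x, -, rfl⟩; exact hνq.nonneg x⟩ ⟨v, hv, rfl⟩
  have hweak : ∀ w z, dualNorm νq w ≤ 1 → z ∈ upperAdjoint Φ w → z ⬝ᵥ ubar ≤ μ :=
    fun w z hw hz => le_csInf (hubar.image νq) <| by
      rintro _ ⟨v, hv, rfl⟩
      exact hνq.dotProduct_le_of_mem_upperAdjoint hw hz hv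
  obtain ⟨w, hw, hwμ⟩ := hνq.exists_dualNorm_le_one_le_dotProduct
    (convex_apply_of_convex_graphOf hsub.2.1 ubar) hμ
  obtain ⟨z, hz, hzμ⟩ := exists_mem_upperAdjoint_le_dotProduct hΦ hubar hwμ
  refine (IsGreatest.csSup_eq ⟨?_, ?_⟩).symm
  · exact ⟨w, z, hw, hz, hzμ.antisymm (hweak w z hw hz)⟩
  · rintro _ ⟨w, z, hw, hz, rfl⟩
    exact hweak w z hw hz

/-- minimax identity
`min_{v ∈ Φ(ū)} ‖v‖ = max { ⟨z, ū⟩ : ‖w‖* ≤ 1, z ∈ Φ*(w) }`. -/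
theorem stmt15 {p q : ℕ} (νp : (Fin p → ℝ) → ℝ) (νq : (Fin q → ℝ) → ℝ)
    (hνp : IsNorm νp) (hνq : IsNorm νq)
    (Φ : (Fin p → ℝ) → Set (Fin q → ℝ)) (hpoly : IsPolyhedralMapping Φ)
    (hsub : IsSublinearMapping Φ) (ubar : Fin p → ℝ) (hubar : ubar ∈ domOf Φ) :
    sInf (νq '' Φ ubar) =
      sSup {r | ∃ (w : Fin q → ℝ) (z : Fin p → ℝ),
        dualNorm νq w ≤ 1 ∧ z ∈ upperAdjoint Φ w ∧ r = z ⬝ᵥ ubar} :=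
  stmt15_general νq hνq Φ hpoly hsub ubar hubar
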